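/- For the noisy problem min_z ‖Dz‖₁ subject to ‖z_M - y‖_∞ ≤ ε with ε > 0, a feasible z is optimal if and only if there exists u with (D^T)_{M^c ∪ Ā} u = 0, u_I = sign(Dz)_I, ‖u‖_∞ ≤ 1, (D^T)_{A↑} u ≥ 0, and (D^T)_{A↓} u ≤ 0, where A↑ = {i ∈ M : y_i - z_i = ε}, A↓ = {i ∈ M : y_i - z_i = -ε}, A = A↑ ∪ A↓, and Ā = M \ A. -/
import Mathlib


open Matrix Pointwise

/-- The (n-2)×n second-order difference operator: (Dz)_i = z_i - 2 z_{i+1} + z_{i+2}. -/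
def Dmat (n : ℕ) : Matrix (Fin (n - 2)) (Fin n) ℝ :=
  fun i j =>
    if (j : ℕ) = (i : ℕ) then 1
    else if (j : ℕ) = (i : ℕ) + 1 then -2
    else if (j : ℕ) = (i : ℕ) + 2 then 1
    else 0

private lemma sign_mul_self' (x : ℝ) : Real.sign x * x = |x| := by
  rcases lt_trichotomy x 0 with h | h | h
  · rw [Real.sign_of_neg h, abs_of_neg h]; ring
  · simp [h]
  · rw [Real.sign_of_pos h, abs_of_pos h]; ring

private lemma abs_sign_le' (x : ℝ) : |Real.sign x| ≤ 1 := by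
  rcases Real.sign_apply_eq x with h | h | h <;> simp [h]

private lemma abs_add_small (a b t : ℝ) (ht : 0 < t) (hb : t * |b| ≤ |a|) (ha : a ≠ 0) :
    |a + t * b| = |a| + t * (Real.sign a * b) := by
  rcases lt_trichotomy a 0 with h | h | h
  · have h1 : t * b ≤ t * |b| := by
      have := le_abs_self b
      nlinarith
    have h2 : a + t * b ≤ 0 := by
      rw [abs_of_neg h] at hb; linarith
    rw [abs_of_nonpos h2, abs_of_neg h, Real.sign_of_neg h]; ring
  · exact absurd h ha
  · have h1 : -(t * b) ≤ t * |b| := by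
      have := neg_abs_le b
      nlinarith
    have h2 : 0 ≤ a + t * b := by
      rw [abs_of_pos h] at hb; linarith
    rw [abs_of_nonneg h2, abs_of_pos h, Real.sign_of_pos h]; ring

private lemma isClosed_setOf_imp {α : Type*} [TopologicalSpace α] {p : Prop} {q : α → Prop}
    (hq : IsClosed {x | q x}) : IsClosed {x | p → q x} := by
  by_cases h : p
  · convert hq using 1; ext x; simp [h]
  · convert isClosed_univ using 1; ext x; simp [h]

/-- General robust optimality criterion for `min ‖Dx‖₁` over a box constraint, for an
arbitrary matrix `D`. -/
theorem robust_l1_box_opt {m n : ℕ} (D : Matrix (Fin m) (Fin n) ℝ) (M : Finset (Fin n))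
    (y : Fin n → ℝ) (ε : ℝ) (hε : 0 < ε) (z : Fin n → ℝ)
    (hfeas : ∀ i ∈ M, |z i - y i| ≤ ε) :
    (∀ w : Fin n → ℝ, (∀ i ∈ M, |w i - y i| ≤ ε) →
        ∑ i, |D.mulVec z i| ≤ ∑ i, |D.mulVec w i|) ↔
    ∃ u : Fin m → ℝ,
      (∀ j : Fin n, (j ∉ M ∨ (j ∈ M ∧ y j - z j ≠ ε ∧ y j - z j ≠ -ε)) →
        Dᵀ.mulVec u j = 0) ∧
      (∀ i, D.mulVec z i ≠ 0 → u i = Real.sign (D.mulVec z i)) ∧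
      (∀ i, |u i| ≤ 1) ∧
      (∀ j ∈ M, y j - z j = ε → 0 ≤ Dᵀ.mulVec u j) ∧
      (∀ j ∈ M, y j - z j = -ε → Dᵀ.mulVec u j ≤ 0) := by
  have key : ∀ (u : Fin m → ℝ) (x : Fin n → ℝ),
      ∑ j, Dᵀ.mulVec u j * x j = ∑ i, u i * D.mulVec x i := by
    intro u x
    have : (Dᵀ *ᵥ u) ⬝ᵥ x = u ⬝ᵥ (D *ᵥ x) := by rw [mulVec_transpose, ← dotProduct_mulVec]
    simpa [dotProduct] using this
  constructor
  · -- hard direction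
    intro hopt
    by_contra hno
    set U : Set (Fin m → ℝ) :=
      {u | ∀ i, |u i| ≤ 1 ∧ (D.mulVec z i ≠ 0 → u i = Real.sign (D.mulVec z i))} with hUdef
    set K : Set (Fin n → ℝ) :=
      {v | ∀ j, ((j ∉ M ∨ (j ∈ M ∧ y j - z j ≠ ε ∧ y j - z j ≠ -ε)) → v j = 0) ∧
        (j ∈ M → y j - z j = ε → 0 ≤ v j) ∧ (j ∈ M → y j - z j = -ε → v j ≤ 0)} with hKdef
    set C : Set (Fin n → ℝ) := ((fun u => Dᵀ.mulVec u) '' U) + (-K) with hCdef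
    have hmemC : ∀ x, x ∈ C ↔ ∃ u ∈ U, ∃ v ∈ K, x = Dᵀ.mulVec u - v := by
      intro x
      constructor
      · intro hx
        obtain ⟨a, ha, b, hb, hab⟩ := Set.mem_add.mp hx
        obtain ⟨u, hu, rfl⟩ := ha
        exact ⟨u, hu, -b, Set.mem_neg.mp hb, by rw [← hab]; ring⟩
      · rintro ⟨u, hu, v, hv, rfl⟩
        exact Set.mem_add.mpr ⟨_, ⟨u, hu, rfl⟩, -v, by simpa using hv, by ring⟩
    -- 0 ∉ C
    have h0C : (0 : Fin n → ℝ) ∉ C := by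
      intro h0
      obtain ⟨u, hu, v, hv, heq⟩ := (hmemC 0).1 h0
      have hDu : Dᵀ.mulVec u = v := sub_eq_zero.mp heq.symm
      exact hno ⟨u,
        fun j hj => by rw [hDu]; exact (hv j).1 hj,
        fun i hi => (hu i).2 hi,
        fun i => (hu i).1,
        fun j hj he => by rw [hDu]; exact (hv j).2.1 hj he,
        fun j hj he => by rw [hDu]; exact (hv j).2.2 hj he⟩
    -- closedness and convexity
    have hUclosed : IsClosed U := by
      have : U = ⋂ i, ({u : Fin m → ℝ | |u i| ≤ 1} ∩
          {u | D.mulVec z i ≠ 0 → u i = Real.sign (D.mulVec z i)}) := by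
        ext u; simp only [hUdef, Set.mem_setOf_eq, Set.mem_iInter, Set.mem_inter_iff]
      rw [this]
      refine isClosed_iInter fun i => IsClosed.inter ?_ ?_
      · exact isClosed_le ((continuous_apply i).abs) continuous_const
      · exact isClosed_setOf_imp (isClosed_eq (continuous_apply i) continuous_const)
    have hUcompact : IsCompact U := by
      refine (isCompact_closedBall (0 : Fin m → ℝ) 1).of_isClosed_subset hUclosed ?_
      intro u hu
      rw [Metric.mem_closedBall, dist_zero_right]
      refine pi_norm_le_iff_of_nonneg (by norm_num) |>.mpr fun i => ?_
      rw [Real.norm_eq_abs]; exact (hu i).1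
    have hKclosed : IsClosed K := by
      have : K = ⋂ j, ({v : Fin n → ℝ |
            (j ∉ M ∨ (j ∈ M ∧ y j - z j ≠ ε ∧ y j - z j ≠ -ε)) → v j = 0} ∩
          ({v | j ∈ M → y j - z j = ε → 0 ≤ v j} ∩
            {v | j ∈ M → y j - z j = -ε → v j ≤ 0})) := by
        ext v; simp only [hKdef, Set.mem_setOf_eq, Set.mem_iInter, Set.mem_inter_iff]
      rw [this]
      refine isClosed_iInter fun j => IsClosed.inter ?_ (IsClosed.inter ?_ ?_)
      · exact isClosed_setOf_imp (isClosed_eq (continuous_apply j) continuous_const)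
      · exact isClosed_setOf_imp (isClosed_setOf_imp
          (isClosed_le continuous_const (continuous_apply j)))
      · exact isClosed_setOf_imp (isClosed_setOf_imp
          (isClosed_le (continuous_apply j) continuous_const))
    have hDTcont : Continuous fun u : Fin m → ℝ => Dᵀ.mulVec u := by
      refine continuous_pi fun j => ?_
      simp only [mulVec, dotProduct]
      exact continuous_finset_sum _ fun i _ => continuous_const.mul (continuous_apply i)
    have hCclosed : IsClosed C := hKclosed.neg.add_left_of_isCompact (hUcompact.image hDTcont)
    have hCconvex : Convex ℝ C := by
      rintro x hx x' hx' a b ha hb hab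
      obtain ⟨u1, hu1, v1, hv1, rfl⟩ := (hmemC x).1 hx
      obtain ⟨u2, hu2, v2, hv2, rfl⟩ := (hmemC x').1 hx'
      refine (hmemC _).2 ⟨a • u1 + b • u2, ?_, a • v1 + b • v2, ?_, ?_⟩
      · intro i
        constructor
        · have h1 := (hu1 i).1
          have h2 := (hu2 i).1
          have : |(a • u1 + b • u2) i| ≤ a * |u1 i| + b * |u2 i| := by
            simp only [Pi.add_apply, Pi.smul_apply, smul_eq_mul]
            calc |a * u1 i + b * u2 i| ≤ |a * u1 i| + |b * u2 i| := abs_add_le _ _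
              _ = a * |u1 i| + b * |u2 i| := by
                  rw [abs_mul, abs_mul, abs_of_nonneg ha, abs_of_nonneg hb]
          nlinarith
        · intro hi
          have h1 := (hu1 i).2 hi
          have h2 := (hu2 i).2 hi
          simp only [Pi.add_apply, Pi.smul_apply, smul_eq_mul, h1, h2]
          rw [← add_mul, hab, one_mul]
      · intro j
        obtain ⟨p1, q1, r1⟩ := hv1 j
        obtain ⟨p2, q2, r2⟩ := hv2 j
        refine ⟨fun h => ?_, fun hM he => ?_, fun hM he => ?_⟩ <;>
          simp only [Pi.add_apply, Pi.smul_apply, smul_eq_mul]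
        · rw [p1 h, p2 h]; ring
        · exact add_nonneg (mul_nonneg ha (q1 hM he)) (mul_nonneg hb (q2 hM he))
        · exact add_nonpos (mul_nonpos_iff.mpr (Or.inl ⟨ha, r1 hM he⟩))
            (mul_nonpos_iff.mpr (Or.inl ⟨hb, r2 hM he⟩))
      · rw [mulVec_add, mulVec_smul, mulVec_smul]
        funext j
        simp only [Pi.add_apply, Pi.sub_apply, Pi.smul_apply, smul_eq_mul]
        ring
    -- separation
    obtain ⟨f, c, hfC, hc0⟩ := geometric_hahn_banach_closed_point hCconvex hCclosed h0C
    have hc : c < 0 := by simpa using hc0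
    set d : Fin n → ℝ := fun j => f (Pi.single j 1) with hddef
    have hf_eq : ∀ x : Fin n → ℝ, f x = ∑ j, x j * d j := by
      intro x
      conv_lhs => rw [show x = ∑ j, Pi.single j (x j) from (Finset.univ_sum_single x).symm]
      rw [map_sum]
      refine Finset.sum_congr rfl fun j _ => ?_
      have hsingle : (Pi.single j (x j) : Fin n → ℝ) = x j • (Pi.single j 1 : Fin n → ℝ) := by
        funext k
        rcases eq_or_ne k j with rfl | h
        · simp
        · simp [Pi.single_eq_of_ne h]
      rw [hsingle, f.map_smul, smul_eq_mul]
    have h0K : (0 : Fin n → ℝ) ∈ K :=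
      fun j => ⟨fun _ => rfl, fun _ _ => le_refl 0, fun _ _ => le_refl 0⟩
    have hfU : ∀ u ∈ U, f (Dᵀ.mulVec u) < c := by
      intro u hu
      have : Dᵀ.mulVec u - 0 ∈ C := (hmemC _).2 ⟨u, hu, 0, h0K, rfl⟩
      simpa using hfC _ this
    set u₀ : Fin m → ℝ := fun i => Real.sign (D.mulVec z i) with hu₀def
    have hu₀ : u₀ ∈ U := fun i => ⟨abs_sign_le' _, fun _ => rfl⟩
    have hKcone : ∀ v ∈ K, ∀ t : ℝ, 0 ≤ t → t • v ∈ K := by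
      intro v hv t ht j
      obtain ⟨p, q, r⟩ := hv j
      refine ⟨fun h => ?_, fun hM he => ?_, fun hM he => ?_⟩ <;>
        simp only [Pi.smul_apply, smul_eq_mul]
      · rw [p h]; ring
      · exact mul_nonneg ht (q hM he)
      · exact mul_nonpos_iff.mpr (Or.inl ⟨ht, r hM he⟩)
    have hfK : ∀ v ∈ K, 0 ≤ f v := by
      intro v hv
      by_contra hneg
      push_neg at hneg
      have hfu0 : f (Dᵀ.mulVec u₀) < c := hfU u₀ hu₀
      set t : ℝ := (c - f (Dᵀ.mulVec u₀) + 1) / (-f v) with htdef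
      have ht : 0 ≤ t := div_nonneg (by linarith) (by linarith)
      have hmem : Dᵀ.mulVec u₀ - t • v ∈ C :=
        (hmemC _).2 ⟨u₀, hu₀, t • v, hKcone v hv t ht, rfl⟩
      have hlt := hfC _ hmem
      rw [map_sub, f.map_smul, smul_eq_mul] at hlt
      have htv : t * (-f v) = c - f (Dᵀ.mulVec u₀) + 1 := by
        rw [htdef, div_mul_cancel₀ _ (by linarith : -f v ≠ 0)]
      nlinarith
    have hdup : ∀ j ∈ M, y j - z j = ε → 0 ≤ d j := by
      intro j hM he
      refine hfK _ fun j' => ?_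
      rcases eq_or_ne j' j with rfl | hne
      · refine ⟨?_, fun _ _ => by simp, fun hM' he' => ?_⟩
        · rintro (h | ⟨_, hne', _⟩)
          · exact absurd hM h
          · exact absurd he hne'
        · exfalso; rw [he] at he'; linarith
      · exact ⟨fun _ => Pi.single_eq_of_ne hne _,
          fun _ _ => by simp [Pi.single_eq_of_ne hne],
          fun _ _ => by simp [Pi.single_eq_of_ne hne]⟩
    have hddn : ∀ j ∈ M, y j - z j = -ε → d j ≤ 0 := by
      intro j hM he
      have hmem : (-(Pi.single j 1) : Fin n → ℝ) ∈ K := by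
        intro j'
        rcases eq_or_ne j' j with rfl | hne
        · refine ⟨?_, fun hM' he' => ?_, fun _ _ => by simp⟩
          · rintro (h | ⟨_, _, hne'⟩)
            · exact absurd hM h
            · exact absurd he hne'
          · exfalso; rw [he'] at he; linarith
        · refine ⟨fun _ => ?_, fun _ _ => ?_, fun _ _ => ?_⟩ <;>
            simp [Pi.single_eq_of_ne hne]
      have := hfK _ hmem
      rw [map_neg] at this
      linarith
    -- the descent direction
    set ustar : Fin m → ℝ := fun i =>
      if D.mulVec z i ≠ 0 then Real.sign (D.mulVec z i) else Real.sign (D.mulVec d i)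
      with hustardef
    have hustar : ustar ∈ U := by
      intro i
      constructor
      · rw [hustardef]; dsimp only; split <;> exact abs_sign_le' _
      · intro hi; rw [hustardef]; dsimp only; rw [if_pos hi]
    have hsum : ∑ i, ustar i * D.mulVec d i < c := by
      have h1 := hfU ustar hustar
      rwa [hf_eq, key] at h1
    -- choose the step size
    have habs_ne : ∀ j, |z j - y j| = ε → j ∈ M → y j - z j = ε ∨ y j - z j = -ε := by
      intro j hj _
      rcases abs_eq (le_of_lt hε) |>.1 hj with h' | h'
      · right; linarith
      · left; linarith
    obtain ⟨t, ht_pos, hg2, hg1, hh1⟩ : ∃ t : ℝ, 0 < t ∧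
        (∀ j, t * (|d j| + 1) ≤ 2 * ε) ∧
        (∀ j, j ∈ M → y j - z j ≠ ε → y j - z j ≠ -ε →
          t * (|d j| + 1) ≤ ε - |z j - y j|) ∧
        (∀ i, D.mulVec z i ≠ 0 → t * (|D.mulVec d i| + 1) ≤ |D.mulVec z i|) := by
      classical
      set g : Fin n → ℝ := fun j =>
        if j ∈ M ∧ y j - z j ≠ ε ∧ y j - z j ≠ -ε then (ε - |z j - y j|) / (|d j| + 1)
        else (2 * ε) / (|d j| + 1) with hgdef
      set h : Fin m → ℝ := fun i =>
        if D.mulVec z i ≠ 0 then |D.mulVec z i| / (|D.mulVec d i| + 1) else 1 with hhdef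
      have hgpos : ∀ j, 0 < g j := by
        intro j
        rw [hgdef]; dsimp only
        split
        · rename_i hcond
          obtain ⟨hM, he, he'⟩ := hcond
          have hlt : |z j - y j| < ε := by
            rcases lt_or_eq_of_le (hfeas j hM) with h' | h'
            · exact h'
            · rcases habs_ne j h' hM with h'' | h''
              · exact absurd h'' he
              · exact absurd h'' he'
          exact div_pos (by linarith) (by positivity)
        · exact div_pos (by linarith) (by positivity)
      have hhpos : ∀ i, 0 < h i := by
        intro i
        rw [hhdef]; dsimp only
        split
        · rename_i hi
          exact div_pos (abs_pos.mpr hi) (by positivity)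
        · norm_num
      set T : Finset ℝ := insert 1 ((Finset.univ.image g) ∪ (Finset.univ.image h)) with hTdef
      have hTne : T.Nonempty := ⟨1, Finset.mem_insert_self _ _⟩
      refine ⟨T.min' hTne, ?_, ?_, ?_, ?_⟩
      · have hall : ∀ x ∈ T, (0:ℝ) < x := by
          intro x hx
          rw [hTdef] at hx
          simp only [Finset.mem_insert, Finset.mem_union, Finset.mem_image] at hx
          rcases hx with h' | ⟨j, _, h'⟩ | ⟨i, _, h'⟩
          · rw [h']; norm_num
          · rw [← h']; exact hgpos j
          · rw [← h']; exact hhpos i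
        exact hall _ (T.min'_mem hTne)
      · intro j
        have hle : T.min' hTne ≤ g j := by
          refine Finset.min'_le _ _ ?_
          rw [hTdef]
          simp only [Finset.mem_insert, Finset.mem_union, Finset.mem_image]
          exact Or.inr (Or.inl ⟨j, Finset.mem_univ j, rfl⟩)
        have hstep : T.min' hTne * (|d j| + 1) ≤ g j * (|d j| + 1) :=
          mul_le_mul_of_nonneg_right hle (by positivity)
        have hgb : g j * (|d j| + 1) ≤ 2 * ε := by
          rw [hgdef]; dsimp only
          split
          · rename_i hcond
            rw [div_mul_cancel₀ _ (by positivity : |d j| + 1 ≠ 0)]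
            have := abs_nonneg (z j - y j)
            linarith
          · rw [div_mul_cancel₀ _ (by positivity : |d j| + 1 ≠ 0)]
        linarith
      · intro j hM he he'
        have hle : T.min' hTne ≤ g j := by
          refine Finset.min'_le _ _ ?_
          rw [hTdef]
          simp only [Finset.mem_insert, Finset.mem_union, Finset.mem_image]
          exact Or.inr (Or.inl ⟨j, Finset.mem_univ j, rfl⟩)
        have hstep : T.min' hTne * (|d j| + 1) ≤ g j * (|d j| + 1) :=
          mul_le_mul_of_nonneg_right hle (by positivity)
        have hgb : g j * (|d j| + 1) = ε - |z j - y j| := by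
          rw [hgdef]; dsimp only
          rw [if_pos ⟨hM, he, he'⟩, div_mul_cancel₀ _ (by positivity : |d j| + 1 ≠ 0)]
        linarith
      · intro i hi
        have hle : T.min' hTne ≤ h i := by
          refine Finset.min'_le _ _ ?_
          rw [hTdef]
          simp only [Finset.mem_insert, Finset.mem_union, Finset.mem_image]
          exact Or.inr (Or.inr ⟨i, Finset.mem_univ i, rfl⟩)
        have hstep : T.min' hTne * (|D.mulVec d i| + 1) ≤ h i * (|D.mulVec d i| + 1) :=
          mul_le_mul_of_nonneg_right hle (by positivity)
        have hhb : h i * (|D.mulVec d i| + 1) = |D.mulVec z i| := by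
          rw [hhdef]; dsimp only
          rw [if_pos hi, div_mul_cancel₀ _ (by positivity : |D.mulVec d i| + 1 ≠ 0)]
        linarith
    -- the competitor
    set w : Fin n → ℝ := z + t • d with hwdef
    have hwj : ∀ j, w j = z j + t * d j := by
      intro j; rw [hwdef]; simp [smul_eq_mul]
    have hDw : ∀ i, D.mulVec w i = D.mulVec z i + t * D.mulVec d i := by
      intro i
      rw [hwdef, mulVec_add, mulVec_smul]
      simp [smul_eq_mul]
    clear_value w
    have hwfeas : ∀ j ∈ M, |w j - y j| ≤ ε := by
      intro j hM
      have habs1 : t * |d j| ≤ t * (|d j| + 1) := by nlinarith [ht_pos, abs_nonneg (d j)]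
      by_cases he : y j - z j = ε
      · have hd := hdup j hM he
        have h2ε : t * d j ≤ 2 * ε := by
          have hd' : t * d j ≤ t * |d j| := by
            nlinarith [le_abs_self (d j), ht_pos]
          linarith [hg2 j]
        have htd : 0 ≤ t * d j := mul_nonneg ht_pos.le hd
        rw [hwj, abs_le]
        constructor <;> nlinarith [he]
      · by_cases he' : y j - z j = -ε
        · have hd := hddn j hM he'
          have h2ε : -(2 * ε) ≤ t * d j := by
            have hd' : -(t * d j) ≤ t * |d j| := by
              nlinarith [neg_abs_le (d j), ht_pos]
            linarith [hg2 j]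
          have htd : t * d j ≤ 0 := mul_nonpos_iff.mpr (Or.inl ⟨ht_pos.le, hd⟩)
          rw [hwj, abs_le]
          constructor <;> nlinarith [he']
        · have h1 : t * |d j| ≤ ε - |z j - y j| := by
            linarith [hg1 j hM he he']
          have habs2 : |w j - y j| ≤ |z j - y j| + t * |d j| := by
            rw [hwj]
            calc |z j + t * d j - y j| = |(z j - y j) + t * d j| := by ring_nf
              _ ≤ |z j - y j| + |t * d j| := abs_add_le _ _
              _ = |z j - y j| + t * |d j| := by rw [abs_mul, abs_of_pos ht_pos]
          linarith
    -- the objective strictly decreases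
    have hobj : ∑ i, |D.mulVec w i| = ∑ i, |D.mulVec z i| + t * ∑ i, ustar i * D.mulVec d i := by
      rw [Finset.mul_sum, ← Finset.sum_add_distrib]
      refine Finset.sum_congr rfl fun i _ => ?_
      rw [hDw i]
      by_cases hz : D.mulVec z i = 0
      · have hui : ustar i = Real.sign (D.mulVec d i) := by
          rw [hustardef]; dsimp only; rw [if_neg (by simpa using hz)]
        rw [hz, hui]
        simp only [zero_add, abs_zero]
        rw [abs_mul, abs_of_pos ht_pos, sign_mul_self']
      · have hui : ustar i = Real.sign (D.mulVec z i) := by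
          rw [hustardef]; dsimp only; rw [if_pos hz]
        have hb : t * |D.mulVec d i| ≤ |D.mulVec z i| := by
          have := hh1 i hz
          nlinarith [ht_pos, abs_nonneg (D.mulVec d i)]
        rw [hui]
        exact abs_add_small _ _ _ ht_pos hb hz
    have hlt : ∑ i, |D.mulVec w i| < ∑ i, |D.mulVec z i| := by
      rw [hobj]
      have : t * ∑ i, ustar i * D.mulVec d i < 0 :=
        mul_neg_of_pos_of_neg ht_pos (lt_trans hsum hc)
      linarith
    exact absurd (hopt w hwfeas) (not_le.2 hlt)
  · -- easy direction
    rintro ⟨u, h0, hI, hbd, hup, hdn⟩ w hw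
    have h1 : ∑ i, |D.mulVec z i| = ∑ i, u i * D.mulVec z i := by
      refine Finset.sum_congr rfl fun i _ => ?_
      by_cases hz : D.mulVec z i = 0
      · simp [hz]
      · rw [hI i hz, sign_mul_self']
    have h2 : 0 ≤ ∑ j, Dᵀ.mulVec u j * (w j - z j) := by
      refine Finset.sum_nonneg fun j _ => ?_
      by_cases hM : j ∈ M
      · by_cases he : y j - z j = ε
        · have hP := hup j hM he
          have hwz : 0 ≤ w j - z j := by
            have := (abs_le.mp (hw j hM)).1
            linarith
          exact mul_nonneg hP hwz
        · by_cases he' : y j - z j = -ε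
          · have hP := hdn j hM he'
            have hwz : w j - z j ≤ 0 := by
              have := (abs_le.mp (hw j hM)).2
              linarith
            exact mul_nonneg_iff.mpr (Or.inr ⟨hP, hwz⟩)
          · rw [h0 j (Or.inr ⟨hM, he, he'⟩), zero_mul]
      · rw [h0 j (Or.inl hM), zero_mul]
    have h3 : ∑ i, u i * D.mulVec w i ≤ ∑ i, |D.mulVec w i| := by
      refine Finset.sum_le_sum fun i _ => ?_
      calc u i * D.mulVec w i ≤ |u i * D.mulVec w i| := le_abs_self _
        _ = |u i| * |D.mulVec w i| := abs_mul _ _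
        _ ≤ 1 * |D.mulVec w i| := mul_le_mul_of_nonneg_right (hbd i) (abs_nonneg _)
        _ = |D.mulVec w i| := one_mul _
    have h4 : ∑ j, Dᵀ.mulVec u j * z j ≤ ∑ j, Dᵀ.mulVec u j * w j := by
      have : ∑ j, Dᵀ.mulVec u j * (w j - z j) =
          ∑ j, Dᵀ.mulVec u j * w j - ∑ j, Dᵀ.mulVec u j * z j := by
        rw [← Finset.sum_sub_distrib]
        refine Finset.sum_congr rfl fun j _ => ?_
        ring
      linarith [h2, this ▸ h2]
    calc ∑ i, |D.mulVec z i| = ∑ i, u i * D.mulVec z i := h1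
      _ = ∑ j, Dᵀ.mulVec u j * z j := (key u z).symm
      _ ≤ ∑ j, Dᵀ.mulVec u j * w j := h4
      _ = ∑ i, u i * D.mulVec w i := key u w
      _ ≤ ∑ i, |D.mulVec w i| := h3

/-- Robust optimality: for the noisy problem min ‖Dz‖₁ s.t. ‖z_M - y‖_∞ ≤ ε (ε > 0),
    a feasible z is optimal iff there exists u with (Dᵀ)_{Mᶜ ∪ Ā} u = 0,
    u_I = sign(Dz)_I, ‖u‖_∞ ≤ 1, (Dᵀ)_{A↑} u ≥ 0 and (Dᵀ)_{A↓} u ≤ 0, where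
    A↑ = {i ∈ M : y_i - z_i = ε}, A↓ = {i ∈ M : y_i - z_i = -ε}, Ā = M \ (A↑ ∪ A↓). -/
theorem stmt16 (n : ℕ) (M : Finset (Fin n)) (y : Fin n → ℝ) (ε : ℝ) (hε : 0 < ε)
    (z : Fin n → ℝ) (hfeas : ∀ i ∈ M, |z i - y i| ≤ ε) :
    (∀ w : Fin n → ℝ, (∀ i ∈ M, |w i - y i| ≤ ε) →
        ∑ i, |(Dmat n).mulVec z i| ≤ ∑ i, |(Dmat n).mulVec w i|) ↔
    ∃ u : Fin (n - 2) → ℝ,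
      (∀ j : Fin n, (j ∉ M ∨ (j ∈ M ∧ y j - z j ≠ ε ∧ y j - z j ≠ -ε)) →
        (Dmat n)ᵀ.mulVec u j = 0) ∧
      (∀ i, (Dmat n).mulVec z i ≠ 0 → u i = Real.sign ((Dmat n).mulVec z i)) ∧
      (∀ i, |u i| ≤ 1) ∧
      (∀ j ∈ M, y j - z j = ε → 0 ≤ (Dmat n)ᵀ.mulVec u j) ∧
      (∀ j ∈ M, y j - z j = -ε → (Dmat n)ᵀ.mulVec u j ≤ 0) :=
  robust_l1_box_opt (Dmat n) M y ε hε z hfeas
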